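/- Fix a bigraph G and c : [k] → V. For every partition π ∈ P(c,G), there exists a unique partition σ ∈ P(c,G)⁰ such that σ ≥ π (σ is coarser than π) and for every block B of σ, the minimum and maximum elements of B lie in the same block of π. -/
import Mathlib


/-- A bigraph: two edge sets on a common vertex set, `E1` reflexive,
`E2` irreflexive and symmetric. -/
structure Bigraph (V : Type) where
  E1 : Set (V × V)
  E2 : Set (V × V)
  refl1 : ∀ v : V, (v, v) ∈ E1
  irrefl2 : ∀ v : V, (v, v) ∉ E2
  symm2 : ∀ v w : V, (v, w) ∈ E2 → (w, v) ∈ E2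

/-- `i` and `j` lie in the same block of `π`. -/
def SameBlock {k : ℕ} (π : Set (Set (Fin k))) (i j : Fin k) : Prop :=
  ∃ B ∈ π, i ∈ B ∧ j ∈ B

def CrossingOne {k : ℕ} (B B' : Set (Fin k)) : Prop :=
  ∃ i i' j j' : Fin k, i < i' ∧ i' < j ∧ j < j' ∧ i ∈ B ∧ j ∈ B ∧ i' ∈ B' ∧ j' ∈ B'

def Crossing {k : ℕ} (B B' : Set (Fin k)) : Prop :=
  CrossingOne B B' ∨ CrossingOne B' B

/-- `B'` is nested inside `B` (written `B ≺ B'` in the paper). -/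
def NestedIn {k : ℕ} (B' B : Set (Fin k)) : Prop :=
  ∃ i ∈ B, ∃ j ∈ B, i < j ∧ (∀ x ∈ B, ¬ (i < x ∧ x < j)) ∧ (∀ x ∈ B', i < x ∧ x < j)

/-- Every block of `π` is monochromatic under `c`. -/
def Monochromatic {V : Type} {k : ℕ} (c : Fin k → V) (π : Set (Set (Fin k))) : Prop :=
  ∀ B ∈ π, ∀ i ∈ B, ∀ j ∈ B, c i = c j

/-- `π ∈ P(c, G)` (Definition 1.3 of compatible partitions). -/
def MemP {V : Type} {k : ℕ} (G : Bigraph V) (c : Fin k → V) (π : Set (Set (Fin k))) : Prop :=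
  Setoid.IsPartition π ∧ Monochromatic c π ∧
  (∀ i1 j i2 : Fin k, i1 < j → j < i2 → SameBlock π i1 i2 → (c i1, c j) ∈ G.E1) ∧
  (∀ i1 j1 i2 j2 : Fin k, i1 < j1 → j1 < i2 → i2 < j2 →
    SameBlock π i1 i2 → SameBlock π j1 j2 → ¬ SameBlock π i1 j1 → (c i2, c j1) ∈ G.E2)

/-- The unobstructed nesting relation `B ≺_un B'` on blocks of `π`. -/
def PrecUn {V : Type} {k : ℕ} (G : Bigraph V) (c : Fin k → V) (π : Set (Set (Fin k)))
    (B B' : Set (Fin k)) : Prop :=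
  B ≠ B' ∧ (∀ i ∈ B, ∀ j ∈ B', c i = c j) ∧ NestedIn B' B ∧
  ∀ B'' ∈ π, NestedIn B'' B → NestedIn B' B'' →
    ∀ i ∈ B, ∀ j ∈ B'', (c i, c j) ∈ G.E2 ∨ c i = c j

/-- `π ∈ P(c,G)⁰`: `π ∈ P(c,G)` and the unobstructed nesting relation is empty. -/
def MemP0 {V : Type} {k : ℕ} (G : Bigraph V) (c : Fin k → V) (π : Set (Set (Fin k))) : Prop :=
  MemP G c π ∧ ∀ B ∈ π, ∀ B' ∈ π, ¬ PrecUn G c π B B'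

/-- `σ` is coarser than `π` (i.e. `π ≤ σ`). -/
def Coarser {k : ℕ} (π σ : Set (Set (Fin k))) : Prop :=
  ∀ A ∈ π, ∃ B ∈ σ, A ⊆ B

section Aux


variable {V : Type} {k : ℕ} {G : Bigraph V} {c : Fin k → V} {π : Set (Set (Fin k))}

/-- uniqueness of blocks in a partition -/
lemma block_eq (hp : Setoid.IsPartition π) {X Y : Set (Fin k)} (hX : X ∈ π) (hY : Y ∈ π)
    {a : Fin k} (haX : a ∈ X) (haY : a ∈ Y) : X = Y := by
  obtain ⟨b, _, hb⟩ := hp.2 a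
  rw [hb X ⟨hX, haX⟩, hb Y ⟨hY, haY⟩]

lemma not_sameBlock (hp : Setoid.IsPartition π) {X Y : Set (Fin k)} (hX : X ∈ π) (hY : Y ∈ π)
    (hXY : X ≠ Y) {i j : Fin k} (hi : i ∈ X) (hj : j ∈ Y) : ¬ SameBlock π i j := by
  rintro ⟨Z, hZ, hiZ, hjZ⟩
  exact hXY ((block_eq hp hX hZ hi hiZ).trans (block_eq hp hZ hY hjZ hj))

lemma block_nonempty (hp : Setoid.IsPartition π) {X : Set (Fin k)} (hX : X ∈ π) : X.Nonempty := by
  rcases Set.eq_empty_or_nonempty X with h | h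
  · exact absurd (h ▸ hX) hp.1
  · exact h

/-- The key crossing consequence: alternating pattern between two distinct blocks. -/
lemma cross_E2 (hπ : MemP G c π) {X Y : Set (Fin k)} (hX : X ∈ π) (hY : Y ∈ π) (hXY : X ≠ Y)
    {p1 q1 p2 q2 : Fin k} (h1 : p1 < q1) (h2 : q1 < p2) (h3 : p2 < q2)
    (hp1 : p1 ∈ X) (hp2 : p2 ∈ X) (hq1 : q1 ∈ Y) (hq2 : q2 ∈ Y) :
    (c p2, c q1) ∈ G.E2 :=
  hπ.2.2.2 p1 q1 p2 q2 h1 h2 h3 ⟨X, hX, hp1, hp2⟩ ⟨Y, hY, hq1, hq2⟩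
    (not_sameBlock hπ.1 hX hY hXY hp1 hq1)

/-- Construct a nesting from flanking information. -/
lemma nestedIn_mk {X D : Set (Fin k)} (hD : D.Nonempty)
    (hside : ∀ x ∈ X, (∀ d ∈ D, x < d) ∨ (∀ d ∈ D, d < x))
    (hlo : ∃ x ∈ X, ∀ d ∈ D, x < d) (hhi : ∃ x ∈ X, ∀ d ∈ D, d < x) :
    NestedIn D X := by
  classical
  set L : Set (Fin k) := {x ∈ X | ∀ d ∈ D, x < d} with hL
  set U : Set (Fin k) := {x ∈ X | ∀ d ∈ D, d < x} with hU
  obtain ⟨a, haL, hamax⟩ := Set.exists_max_image L id (Set.toFinite L)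
    (by obtain ⟨x, hx, h⟩ := hlo; exact ⟨x, hx, h⟩)
  obtain ⟨b, hbU, hbmin⟩ := Set.exists_min_image U id (Set.toFinite U)
    (by obtain ⟨x, hx, h⟩ := hhi; exact ⟨x, hx, h⟩)
  obtain ⟨d0, hd0⟩ := hD
  refine ⟨a, haL.1, b, hbU.1, lt_trans (haL.2 d0 hd0) (hbU.2 d0 hd0), ?_, ?_⟩
  · rintro x hxX ⟨hax, hxb⟩
    rcases hside x hxX with h | h
    · exact absurd (hamax x ⟨hxX, h⟩) (not_le.2 hax)
    · exact absurd (hbmin x ⟨hxX, h⟩) (not_le.2 hxb)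
  · intro x hx
    exact ⟨haL.2 x hx, hbU.2 x hx⟩

lemma nestedIn_trans {O M I : Set (Fin k)} (hI : I.Nonempty)
    (hMO : NestedIn M O) (hIM : NestedIn I M) : NestedIn I O := by
  obtain ⟨x, hxO, y, hyO, hxy, hgapO, hMsub⟩ := hMO
  obtain ⟨d1, hd1M, d2, hd2M, hd12, hgapM, hIsub⟩ := hIM
  have hd1 := hMsub d1 hd1M
  have hd2 := hMsub d2 hd2M
  refine nestedIn_mk hI ?_ ⟨x, hxO, ?_⟩ ⟨y, hyO, ?_⟩
  · intro z hz
    by_cases hzx : z ≤ x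
    · exact Or.inl fun i hi => lt_of_le_of_lt hzx (lt_trans hd1.1 (hIsub i hi).1)
    · right
      intro i hi
      have hzy : y ≤ z := by
        by_contra hc
        exact hgapO z hz ⟨lt_of_not_ge hzx, lt_of_not_ge hc⟩
      exact lt_of_lt_of_le (lt_trans (hIsub i hi).2 hd2.2) hzy
  · exact fun i hi => lt_trans hd1.1 (hIsub i hi).1
  · exact fun i hi => lt_trans (hIsub i hi).2 hd2.2

lemma nestedIn_ne {X D : Set (Fin k)} (hD : D.Nonempty) (h : NestedIn D X) : D ≠ X := by
  obtain ⟨i, hiX, j, hjX, _, _, hsub⟩ := h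
  obtain ⟨d, hd⟩ := hD
  intro he
  exact absurd (hsub i (he ▸ hiX)).1 (lt_irrefl i)

/-- A nested block has an element of the outer set below all of it. -/
lemma nestedIn_flank {X D : Set (Fin k)} (h : NestedIn D X) :
    ∃ x ∈ X, ∀ d ∈ D, x < d := by
  obtain ⟨i, hiX, j, _, _, _, hsub⟩ := h
  exact ⟨i, hiX, fun d hd => (hsub d hd).1⟩

end Aux

section Merge

variable {V : Type} {k : ℕ} {G : Bigraph V} {c : Fin k → V} {π : Set (Set (Fin k))}
variable {B D : Set (Fin k)}

def mergeP {k : ℕ} (π : Set (Set (Fin k))) (B D : Set (Fin k)) : Set (Set (Fin k)) :=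
  insert (B ∪ D) (π \ {B, D})

lemma mem_mergeP {X : Set (Fin k)} :
    X ∈ mergeP π B D ↔ X = B ∪ D ∨ (X ∈ π ∧ X ≠ B ∧ X ≠ D) := by
  simp [mergeP, Set.mem_insert_iff, Set.mem_diff, not_or, and_assoc]

lemma mergeP_isPartition (hp : Setoid.IsPartition π) (hB : B ∈ π) (hD : D ∈ π) :
    Setoid.IsPartition (mergeP π B D) := by
  constructor
  · intro h
    rcases mem_mergeP.mp h with h | h
    · obtain ⟨x, hx⟩ := block_nonempty hp hB
      exact absurd (h ▸ (Or.inl hx : x ∈ B ∪ D)) (Set.notMem_empty x)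
    · exact hp.1 h.1
  · intro x
    by_cases hx : x ∈ B ∪ D
    · refine ⟨B ∪ D, ⟨mem_mergeP.mpr (Or.inl rfl), hx⟩, ?_⟩
      rintro Z ⟨hZ, hxZ⟩
      rcases mem_mergeP.mp hZ with h | ⟨hZπ, hZB, hZD⟩
      · exact h
      · rcases hx with hx | hx
        · exact absurd (block_eq hp hZπ hB hxZ hx) hZB
        · exact absurd (block_eq hp hZπ hD hxZ hx) hZD
    · obtain ⟨Z, ⟨hZπ, hxZ⟩, _⟩ := hp.2 x
      have hZB : Z ≠ B := fun h => hx (Or.inl (h ▸ hxZ))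
      have hZD : Z ≠ D := fun h => hx (Or.inr (h ▸ hxZ))
      refine ⟨Z, ⟨mem_mergeP.mpr (Or.inr ⟨hZπ, hZB, hZD⟩), hxZ⟩, ?_⟩
      rintro W ⟨hW, hxW⟩
      rcases mem_mergeP.mp hW with h | ⟨hWπ, _, _⟩
      · exact absurd (h ▸ hxW) hx
      · exact block_eq hp hWπ hZπ hxW hxZ

lemma sameBlock_mergeP {x y : Fin k} :
    SameBlock (mergeP π B D) x y ↔
      SameBlock π x y ∨ (x ∈ B ∪ D ∧ y ∈ B ∪ D) := by
  constructor
  · rintro ⟨Z, hZ, hxZ, hyZ⟩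
    rcases mem_mergeP.mp hZ with h | ⟨hZπ, _, _⟩
    · exact Or.inr ⟨h ▸ hxZ, h ▸ hyZ⟩
    · exact Or.inl ⟨Z, hZπ, hxZ, hyZ⟩
  · rintro (⟨Z, hZ, hxZ, hyZ⟩ | ⟨hx, hy⟩)
    · by_cases hZB : Z = B
      · exact ⟨B ∪ D, mem_mergeP.mpr (Or.inl rfl), Or.inl (hZB ▸ hxZ), Or.inl (hZB ▸ hyZ)⟩
      · by_cases hZD : Z = D
        · exact ⟨B ∪ D, mem_mergeP.mpr (Or.inl rfl), Or.inr (hZD ▸ hxZ), Or.inr (hZD ▸ hyZ)⟩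
        · exact ⟨Z, mem_mergeP.mpr (Or.inr ⟨hZ, hZB, hZD⟩), hxZ, hyZ⟩
    · exact ⟨B ∪ D, mem_mergeP.mpr (Or.inl rfl), hx, hy⟩

end Merge

section KeyBetween

variable {V : Type} {k : ℕ} {G : Bigraph V} {c : Fin k → V} {π : Set (Set (Fin k))}
variable {B D : Set (Fin k)} {a b : Fin k}

/-- The central combinatorial lemma: if a block `J` of `π` has two elements
strictly between `a` and `b` flanking an element of `D`, then `c(B)` and `c(J)`
are `E2`-related. -/
lemma key_between (hπ : MemP G c π) (hB : B ∈ π) (hD : D ∈ π)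
    (haB : a ∈ B) (hbB : b ∈ B) (hab : a < b)
    (hgap : ∀ x ∈ B, ¬ (a < x ∧ x < b)) (hDab : ∀ x ∈ D, a < x ∧ x < b)
    (hcol : ∀ i ∈ B, ∀ j ∈ D, c i = c j)
    (hE2clause : ∀ F ∈ π, NestedIn F B → NestedIn D F →
      ∀ i ∈ B, ∀ j ∈ F, (c i, c j) ∈ G.E2)
    {J : Set (Fin k)} (hJ : J ∈ π) (hJB : J ≠ B) (hJD : J ≠ D)
    {p q d0 : Fin k} (hp : p ∈ J) (hq : q ∈ J) (hd0 : d0 ∈ D)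
    (hap : a < p) (hpd : p < d0) (hdq : d0 < q) (hqb : q < b) :
    ∀ i ∈ B, ∀ j ∈ J, (c i, c j) ∈ G.E2 := by
  have hmono := hπ.2.1
  suffices h : (c a, c p) ∈ G.E2 by
    intro i hi j hj
    rw [hmono B hB i hi a haB, hmono J hJ j hj p hp]
    exact h
  by_cases hJab : ∀ x ∈ J, a < x ∧ x < b
  · by_cases hDpq : ∀ x ∈ D, p < x ∧ x < q
    · by_cases hJmid : ∃ x ∈ J, ∃ d1 ∈ D, ∃ d2 ∈ D, d1 < x ∧ x < d2
      · obtain ⟨x, hxJ, d1, hd1, d2, hd2, hx1, hx2⟩ := hJmid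
        have h := cross_E2 hπ hJ hD hJD (hDpq d1 hd1).1 hx1 hx2 hp hxJ hd1 hd2
        rw [hmono J hJ x hxJ p hp, ← hcol a haB d1 hd1] at h
        exact G.symm2 _ _ h
      · have hnest1 : NestedIn D J := by
          refine nestedIn_mk ⟨d0, hd0⟩ ?_ ⟨p, hp, fun d hd => (hDpq d hd).1⟩
            ⟨q, hq, fun d hd => (hDpq d hd).2⟩
          intro x hxJ
          by_contra hcon
          push_neg at hcon
          obtain ⟨⟨d1, hd1, hd1x⟩, d2, hd2, hxd2⟩ := hcon
          have h1 : d1 < x := lt_of_le_of_ne hd1x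
            (fun h => hJD (block_eq hπ.1 hJ hD hxJ (h ▸ hd1)))
          have h2 : x < d2 := lt_of_le_of_ne hxd2
            (fun h => hJD (block_eq hπ.1 hJ hD hxJ (h ▸ hd2)))
          exact hJmid ⟨x, hxJ, d1, hd1, d2, hd2, h1, h2⟩
        have hnest2 : NestedIn J B := ⟨a, haB, b, hbB, hab, hgap, hJab⟩
        exact hE2clause J hJ hnest2 hnest1 a haB p hp
    · push_neg at hDpq
      obtain ⟨x, hxD, hx⟩ := hDpq
      rcases lt_trichotomy x p with h | h | h
      · have hE := cross_E2 hπ hD hJ (fun he => hJD he.symm) h hpd hdq hxD hd0 hp hq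
        rwa [← hcol a haB d0 hd0] at hE
      · exact absurd (block_eq hπ.1 hD hJ hxD (h ▸ hp)) (fun he => hJD he.symm)
      · have hqx : q < x := lt_of_le_of_ne (hx h)
          (fun he => hJD (block_eq hπ.1 hJ hD hq (he ▸ hxD)))
        have hE := cross_E2 hπ hJ hD hJD hpd hdq hqx hp hq hd0 hxD
        rw [hmono J hJ q hq p hp, ← hcol a haB d0 hd0] at hE
        exact G.symm2 _ _ hE
  · push_neg at hJab
    obtain ⟨x, hxJ, hx⟩ := hJab
    have hxa_or : x < a ∨ x = a ∨ (a < x ∧ b ≤ x) ∨ x = b := by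
      rcases lt_trichotomy x a with h | h | h
      · exact Or.inl h
      · exact Or.inr (Or.inl h)
      · rcases eq_or_lt_of_le (hx h) with h' | h'
        · exact Or.inr (Or.inr (Or.inr h'.symm))
        · exact Or.inr (Or.inr (Or.inl ⟨h, le_of_lt h'⟩))
    rcases hxa_or with h | h | h | h
    · have hE := cross_E2 hπ hJ hB hJB h hap (lt_trans (lt_trans hpd hdq) hqb) hxJ hp haB hbB
      exact G.symm2 _ _ (by rwa [hmono J hJ p hp p hp] at hE)
    · exact absurd (block_eq hπ.1 hJ hB hxJ (h ▸ haB)) hJB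
    · have hbx : b < x :=
        lt_of_le_of_ne h.2 (fun he => hJB (block_eq hπ.1 hJ hB hxJ (he ▸ hbB)))
      have hE := cross_E2 hπ hB hJ (fun he => hJB he.symm) hap
        (lt_trans (lt_trans hpd hdq) hqb) hbx haB hbB hp hxJ
      rwa [hmono B hB b hbB a haB] at hE
    · exact absurd (block_eq hπ.1 hJ hB hxJ (h ▸ hbB)) hJB

end KeyBetween

section MergeMemP

variable {V : Type} {k : ℕ} {G : Bigraph V} {c : Fin k → V} {π : Set (Set (Fin k))}
variable {B D : Set (Fin k)} {a b : Fin k}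

lemma memP_mergeP (hπ : MemP G c π) (hB : B ∈ π) (hD : D ∈ π)
    (haB : a ∈ B) (hbB : b ∈ B) (hab : a < b)
    (hgap : ∀ x ∈ B, ¬ (a < x ∧ x < b)) (hDab : ∀ x ∈ D, a < x ∧ x < b)
    (hcol : ∀ i ∈ B, ∀ j ∈ D, c i = c j)
    (hE2clause : ∀ F ∈ π, NestedIn F B → NestedIn D F →
      ∀ i ∈ B, ∀ j ∈ F, (c i, c j) ∈ G.E2) :
    MemP G c (mergeP π B D) := by
  have hmono := hπ.2.1
  have hBD : B ≠ D := by
    intro he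
    obtain ⟨d, hd⟩ := block_nonempty hπ.1 hD
    exact hgap d (he ▸ hd) (hDab d hd)
  refine ⟨mergeP_isPartition hπ.1 hB hD, ?_, ?_, ?_⟩
  · -- monochromatic
    intro X hX i hi j hj
    rcases mem_mergeP.mp hX with h | ⟨hXπ, _, _⟩
    · subst h
      rcases hi with hi | hi <;> rcases hj with hj | hj
      · exact hmono B hB i hi j hj
      · exact hcol i hi j hj
      · exact ((hcol j hj i hi).symm)
      · exact hmono D hD i hi j hj
    · exact hmono X hXπ i hi j hj
  · -- E1 condition
    intro i1 j i2 h1 h2 hS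
    rcases sameBlock_mergeP.mp hS with hS | ⟨hi1, hi2⟩
    · exact hπ.2.2.1 i1 j i2 h1 h2 hS
    · rcases hi1 with hi1 | hi1 <;> rcases hi2 with hi2 | hi2
      · exact hπ.2.2.1 i1 j i2 h1 h2 ⟨B, hB, hi1, hi2⟩
      · -- i1 ∈ B, i2 ∈ D
        have hi1a : i1 ≤ a :=
          le_of_not_gt fun h => hgap i1 hi1 ⟨h, lt_trans (lt_trans h1 h2) (hDab i2 hi2).2⟩
        rcases lt_trichotomy j a with hja | hja | hja
        · exact hπ.2.2.1 i1 j a h1 hja ⟨B, hB, hi1, haB⟩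
        · rw [hja, ← hmono B hB i1 hi1 a haB]
          exact G.refl1 _
        · have : (c a, c j) ∈ G.E1 :=
            hπ.2.2.1 a j b hja (lt_trans h2 (hDab i2 hi2).2) ⟨B, hB, haB, hbB⟩
          rwa [hmono B hB i1 hi1 a haB]
      · -- i1 ∈ D, i2 ∈ B
        have hbi2 : b ≤ i2 :=
          le_of_not_gt fun h => hgap i2 hi2 ⟨lt_trans (hDab i1 hi1).1 (lt_trans h1 h2), h⟩
        rcases lt_trichotomy j b with hjb | hjb | hjb
        · have : (c a, c j) ∈ G.E1 :=
            hπ.2.2.1 a j b (lt_trans (hDab i1 hi1).1 h1) hjb ⟨B, hB, haB, hbB⟩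
          rwa [← hcol a haB i1 hi1]
        · rw [hjb, ← hcol b hbB i1 hi1]
          exact G.refl1 _
        · have : (c b, c j) ∈ G.E1 :=
            hπ.2.2.1 b j i2 hjb h2 ⟨B, hB, hbB, hi2⟩
          rwa [← hcol b hbB i1 hi1]
      · exact hπ.2.2.1 i1 j i2 h1 h2 ⟨D, hD, hi1, hi2⟩
  · -- E2 condition
    intro i1 j1 i2 j2 h1 h2 h3 hS13 hS24 hns
    have hnsπ : ¬ SameBlock π i1 j1 := fun h => hns (sameBlock_mergeP.mpr (Or.inl h))
    by_cases h13 : SameBlock π i1 i2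
    · by_cases h24 : SameBlock π j1 j2
      · exact hπ.2.2.2 i1 j1 i2 j2 h1 h2 h3 h13 h24 hnsπ
      · -- j1, j2 split between B and D
        obtain ⟨hj1, hj2⟩ : j1 ∈ B ∪ D ∧ j2 ∈ B ∪ D := by
          rcases sameBlock_mergeP.mp hS24 with h | h
          · exact absurd h h24
          · exact h
        have hi1BD : i1 ∉ B ∪ D := fun h =>
          hns (sameBlock_mergeP.mpr (Or.inr ⟨h, hj1⟩))
        obtain ⟨I, hI, hi1I, hi2I⟩ := h13
        have hIB : I ≠ B := fun h => hi1BD (Or.inl (h ▸ hi1I))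
        have hID : I ≠ D := fun h => hi1BD (Or.inr (h ▸ hi1I))
        rcases hj1 with hj1 | hj1 <;> rcases hj2 with hj2 | hj2
        · exact absurd ⟨B, hB, hj1, hj2⟩ h24
        · -- 3a : j1 ∈ B, j2 ∈ D
          exact cross_E2 hπ hI hB hIB h1 h2 (lt_trans h3 (hDab j2 hj2).2) hi1I hi2I hj1 hbB
        · -- 3b : j1 ∈ D, j2 ∈ B
          have haj1 := (hDab j1 hj1).1
          rcases lt_trichotomy i1 a with hia | hia | hia
          · have hE := cross_E2 hπ hI hB hIB hia (lt_trans haj1 h2) h3 hi1I hi2I haB hj2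
            rwa [hcol a haB j1 hj1] at hE
          · exact absurd (Or.inl (hia ▸ haB)) hi1BD
          · rcases lt_trichotomy i2 b with hib | hib | hib
            · have h := key_between hπ hB hD haB hbB hab hgap hDab hcol hE2clause
                hI hIB hID hi1I hi2I hj1 hia h1 h2 hib
              have hE := G.symm2 _ _ (h a haB i2 hi2I)
              rwa [hcol a haB j1 hj1] at hE
            · exact absurd (block_eq hπ.1 hI hB (hib ▸ hi2I) hbB) hIB
            · have hE := cross_E2 hπ hB hI (fun he => hIB he.symm) hia
                (lt_trans h1 (hDab j1 hj1).2) hib haB hbB hi1I hi2I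
              have hE' := G.symm2 _ _ hE
              rwa [hmono I hI i1 hi1I i2 hi2I, hcol b hbB j1 hj1] at hE'
        · exact absurd ⟨D, hD, hj1, hj2⟩ h24
    · -- i1, i2 split between B and D
      obtain ⟨hi1, hi2⟩ : i1 ∈ B ∪ D ∧ i2 ∈ B ∪ D := by
        rcases sameBlock_mergeP.mp hS13 with h | h
        · exact absurd h h13
        · exact h
      have hj1BD : j1 ∉ B ∪ D := fun h =>
        hns (sameBlock_mergeP.mpr (Or.inr ⟨hi1, h⟩))
      obtain ⟨J, hJ, hj1J, hj2J⟩ : SameBlock π j1 j2 := by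
        rcases sameBlock_mergeP.mp hS24 with h | h
        · exact h
        · exact absurd h.1 hj1BD
      have hJB : J ≠ B := fun h => hj1BD (Or.inl (h ▸ hj1J))
      have hJD : J ≠ D := fun h => hj1BD (Or.inr (h ▸ hj1J))
      rcases hi1 with hi1 | hi1 <;> rcases hi2 with hi2 | hi2
      · exact absurd ⟨B, hB, hi1, hi2⟩ h13
      · -- 2a : i1 ∈ B, i2 ∈ D
        rcases lt_trichotomy j1 a with hja | hja | hja
        · have hE := cross_E2 hπ hB hJ (Ne.symm hJB) h1 hja (lt_trans (hDab i2 hi2).1 h3) hi1 haB hj1J hj2J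
          rwa [hcol a haB i2 hi2] at hE
        · exact absurd (Or.inl (hja ▸ haB)) hj1BD
        · rcases lt_trichotomy j2 b with hjb | hjb | hjb
          · have h := key_between hπ hB hD haB hbB hab hgap hDab hcol hE2clause
              hJ hJB hJD hj1J hj2J hi2 hja h2 h3 hjb
            have hE := h a haB j1 hj1J
            rwa [hcol a haB i2 hi2] at hE
          · exact absurd (block_eq hπ.1 hJ hB (hjb ▸ hj2J) hbB) hJB
          · have hE := cross_E2 hπ hB hJ (Ne.symm hJB) hja (lt_trans h2 (hDab i2 hi2).2) hjb haB hbB hj1J hj2J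
            rwa [hcol b hbB i2 hi2] at hE
      · -- 2b : i1 ∈ D, i2 ∈ B
        have hbi2 : b ≤ i2 :=
          le_of_not_gt fun h => hgap i2 hi2 ⟨lt_trans (hDab i1 hi1).1 (lt_trans h1 h2), h⟩
        rcases lt_trichotomy j1 b with hjb | hjb | hjb
        · have hE := cross_E2 hπ hB hJ (Ne.symm hJB) (lt_trans (hDab i1 hi1).1 h1) hjb
            (lt_of_le_of_lt hbi2 h3) haB hbB hj1J hj2J
          rwa [← hmono B hB i2 hi2 b hbB] at hE
        · exact absurd (Or.inl (hjb ▸ hbB)) hj1BD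
        · exact cross_E2 hπ hB hJ (Ne.symm hJB) hjb h2 h3 hbB hi2 hj1J hj2J
      · exact absurd ⟨D, hD, hi1, hi2⟩ h13

end MergeMemP

section Tight

variable {V : Type} {k : ℕ} {G : Bigraph V} {c : Fin k → V} {π : Set (Set (Fin k))}
variable {B D0 : Set (Fin k)}

lemma exists_tight (hπ : MemP G c π) (hB : B ∈ π) (hD0π : D0 ∈ π)
    (hPrec : PrecUn G c π B D0) :
    ∃ D ∈ π, B ≠ D ∧ (∀ i ∈ B, ∀ j ∈ D, c i = c j) ∧ NestedIn D B ∧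
      (∀ F ∈ π, NestedIn F B → NestedIn D F → ∀ i ∈ B, ∀ j ∈ F, (c i, c j) ∈ G.E2) := by
  classical
  have hmono := hπ.2.1
  set S : Set (Set (Fin k)) :=
    {F | F ∈ π ∧ (∀ i ∈ B, ∀ j ∈ F, c i = c j) ∧ NestedIn F B ∧ (NestedIn D0 F ∨ F = D0)}
    with hS
  have hD0S : D0 ∈ S := ⟨hD0π, hPrec.2.1, hPrec.2.2.1, Or.inr rfl⟩
  set T : Set (Fin k) := {x | ∃ F ∈ S, x ∈ F} with hT
  have hTne : T.Nonempty := by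
    obtain ⟨d, hd⟩ := block_nonempty hπ.1 hD0π
    exact ⟨d, D0, hD0S, hd⟩
  obtain ⟨m, hmT, hmin⟩ := Set.exists_min_image T id (Set.toFinite T) hTne
  obtain ⟨D, hDS, hmD⟩ := hmT
  obtain ⟨hDπ, hDcol, hDnest, hDalt⟩ := hDS
  have hclause : ∀ F ∈ π, NestedIn F B → NestedIn D F →
      ∀ i ∈ B, ∀ j ∈ F, (c i, c j) ∈ G.E2 ∨ c i = c j := by
    intro F hF hFB hDF i hi j hj
    rcases hDalt with h | h
    · exact hPrec.2.2.2 F hF hFB (nestedIn_trans (block_nonempty hπ.1 hD0π) hDF h) i hi j hj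
    · exact hPrec.2.2.2 F hF hFB (h ▸ hDF) i hi j hj
  refine ⟨D, hDπ, Ne.symm (nestedIn_ne (block_nonempty hπ.1 hDπ) hDnest), hDcol, hDnest, ?_⟩
  intro F hF hFB hDF i hi j hj
  rcases hclause F hF hFB hDF i hi j hj with h | h
  · exact h
  · exfalso
    have hFS : F ∈ S := by
      refine ⟨hF, ?_, hFB, ?_⟩
      · intro i' hi' j' hj'
        rw [hmono B hB i' hi' i hi, h, hmono F hF j hj j' hj']
      · rcases hDalt with hh | hh
        · exact Or.inl (nestedIn_trans (block_nonempty hπ.1 hD0π) hDF hh)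
        · exact Or.inl (hh ▸ hDF)
    obtain ⟨f, hfF, hflt⟩ := nestedIn_flank hDF
    exact absurd (hmin f ⟨F, hFS, hfF⟩) (not_le.2 (hflt m hmD))

end Tight

section Unique

variable {V : Type} {k : ℕ} {G : Bigraph V} {c : Fin k → V} {π τ : Set (Set (Fin k))}
variable {B D : Set (Fin k)}

/-- Any valid envelope of `π` must merge the two blocks of an unobstructed pair. -/
lemma absorb (hπ : MemP G c π) (hB : B ∈ π) (hD : D ∈ π) (hPrec : PrecUn G c π B D)
    (hτ : MemP0 G c τ) (hco : Coarser π τ)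
    (hmm : ∀ C ∈ τ, ∃ i ∈ C, ∃ j ∈ C, (∀ x ∈ C, i ≤ x ∧ x ≤ j) ∧ SameBlock π i j) :
    ∃ C ∈ τ, B ⊆ C ∧ D ⊆ C := by
  classical
  have hmono := hπ.2.1
  have hτp := hτ.1.1
  have hτmono := hτ.1.2.1
  obtain ⟨Bh, hBhτ, hBsub⟩ := hco B hB
  obtain ⟨Dh, hDhτ, hDsub⟩ := hco D hD
  by_cases hne : Bh = Dh
  · exact ⟨Bh, hBhτ, hBsub, hne ▸ hDsub⟩
  exfalso
  obtain ⟨a, haB, b, hbB, hab, hgap, hDab⟩ := hPrec.2.2.1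
  obtain ⟨d0, hd0⟩ := block_nonempty hπ.1 hD
  have hcolBD := hPrec.2.1
  have haBh : a ∈ Bh := hBsub haB
  have hbBh : b ∈ Bh := hBsub hbB
  have hd0Dh : d0 ∈ Dh := hDsub hd0
  have had0 : c a = c d0 := hcolBD a haB d0 hd0
  -- every element of Dh lies strictly between a and b
  have hDhab : ∀ x ∈ Dh, a < x ∧ x < b := by
    intro x hx
    rcases lt_trichotomy x a with h | h | h
    · exfalso
      have hE := cross_E2 hτ.1 hDhτ hBhτ (Ne.symm hne) h (hDab d0 hd0).1 (hDab d0 hd0).2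
        hx hd0Dh haBh hbBh
      rw [← had0] at hE
      exact G.irrefl2 _ hE
    · exact absurd (block_eq hτp hBhτ hDhτ haBh (h ▸ hx)) hne
    · rcases lt_trichotomy x b with h' | h' | h'
      · exact ⟨h, h'⟩
      · exact absurd (block_eq hτp hBhτ hDhτ hbBh (h' ▸ hx)) hne
      · exfalso
        have hE := cross_E2 hτ.1 hBhτ hDhτ hne (hDab d0 hd0).1 (hDab d0 hd0).2 h' haBh hbBh hd0Dh hx
        rw [hτmono Bh hBhτ b hbBh a haBh, had0] at hE
        exact G.irrefl2 _ hE
  -- Dh is nested in Bh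
  have hnestDB : NestedIn Dh Bh := by
    refine nestedIn_mk (block_nonempty hτp hDhτ) ?_
      ⟨a, haBh, fun d hd => (hDhab d hd).1⟩ ⟨b, hbBh, fun d hd => (hDhab d hd).2⟩
    intro z hz
    by_contra hcon
    push_neg at hcon
    obtain ⟨⟨d1, hd1, hd1z⟩, d2, hd2, hzd2⟩ := hcon
    have h1 : d1 < z := lt_of_le_of_ne hd1z
      (fun h => hne (block_eq hτp hBhτ hDhτ hz (h ▸ hd1)))
    have h2 : z < d2 := lt_of_le_of_ne hzd2
      (fun h => hne (block_eq hτp hBhτ hDhτ hz (by rw [h]; exact hd2)))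
    have hE := cross_E2 hτ.1 hBhτ hDhτ hne (hDhab d1 hd1).1 h1 h2 haBh hz hd1 hd2
    rw [hτmono Bh hBhτ z hz a haBh, had0, ← hτmono Dh hDhτ d0 hd0Dh d1 hd1] at hE
    exact G.irrefl2 _ hE
  -- the unobstructedness clause for (Bh, Dh) in τ
  have hclause : ∀ E ∈ τ, NestedIn E Bh → NestedIn Dh E →
      ∀ i ∈ Bh, ∀ j ∈ E, (c i, c j) ∈ G.E2 ∨ c i = c j := by
    intro E hE hEB hDE i hi j hj
    obtain ⟨m, hmE, M, hME, hbound, A, hA, hmA, hMA⟩ := hmm E hE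
    have hAE : A ⊆ E := by
      obtain ⟨Z, hZτ, hAZ⟩ := hco A hA
      rwa [block_eq hτp hZτ hE (hAZ hmA) hmE] at hAZ
    obtain ⟨e1, he1E, e2, he2E, he12, hgapE, hDhsub⟩ := hDE
    have hmd : ∀ d ∈ D, m < d := fun d hd =>
      lt_of_le_of_lt ((hbound e1 he1E).1) (hDhsub d (hDsub hd)).1
    have hMd : ∀ d ∈ D, d < M := fun d hd =>
      lt_of_lt_of_le (hDhsub d (hDsub hd)).2 ((hbound e2 he2E).2)
    have hAD : A ≠ D := fun h => lt_irrefl m (hmd m (h ▸ hmA))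
    have hEBh : E ≠ Bh := nestedIn_ne (block_nonempty hτp hE) hEB
    have hAB : A ≠ B := by
      intro h
      exact hEBh (block_eq hτp hE hBhτ (hAE hmA) (hBsub (h ▸ hmA)))
    -- colors of i and j
    have hci : c i = c a := hτmono Bh hBhτ i hi a haBh
    have hcj : c j = c m := hτmono E hE j hj m hmE
    by_cases hmid : ∃ x ∈ A, ∃ d1 ∈ D, ∃ d2 ∈ D, d1 < x ∧ x < d2
    · obtain ⟨x, hxA, d1, hd1, d2, hd2, hx1, hx2⟩ := hmid
      left
      have hE2 := cross_E2 hπ hA hD hAD (hmd d1 hd1) hx1 hx2 hmA hxA hd1 hd2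
      have hE2' := G.symm2 _ _ hE2
      rw [← hcolBD a haB d1 hd1, ← hmono A hA m hmA x hxA] at hE2'
      rw [hci, hcj]
      exact hE2'
    · have hnestDA : NestedIn D A := by
        refine nestedIn_mk (block_nonempty hπ.1 hD) ?_ ⟨m, hmA, hmd⟩ ⟨M, hMA, hMd⟩
        intro z hz
        by_contra hcon
        push_neg at hcon
        obtain ⟨⟨d1, hd1, hd1z⟩, d2, hd2, hzd2⟩ := hcon
        have h1 : d1 < z := lt_of_le_of_ne hd1z
          (fun h => hAD (block_eq hπ.1 hA hD hz (h ▸ hd1)))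
        have h2 : z < d2 := lt_of_le_of_ne hzd2
          (fun h => hAD (block_eq hπ.1 hA hD hz (h.symm ▸ hd2)))
        exact hmid ⟨z, hz, d1, hd1, d2, hd2, h1, h2⟩
      have hnestAB : NestedIn A B := by
        obtain ⟨x0, hx0B, y0, hy0B, hxy0, hgapB, hEsub⟩ := hEB
        have he2y0 := (hEsub e2 he2E).2
        have he1x0 := (hEsub e1 he1E).1
        have hax0 : a ≤ x0 := by
          by_contra hcc
          push_neg at hcc
          refine hgapB a haBh ⟨hcc, ?_⟩
          calc a < d0 := (hDab d0 hd0).1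
            _ < e2 := (hDhsub d0 hd0Dh).2
            _ < y0 := he2y0
        have hy0b : y0 ≤ b := by
          by_contra hcc
          push_neg at hcc
          refine hgapB b hbBh ⟨?_, hcc⟩
          calc x0 < e1 := he1x0
            _ < d0 := (hDhsub d0 hd0Dh).1
            _ < b := (hDab d0 hd0).2
        refine ⟨a, haB, b, hbB, hab, hgap, fun z hz => ?_⟩
        have hzE := hAE hz
        exact ⟨lt_of_le_of_lt hax0 (hEsub z hzE).1, lt_of_lt_of_le (hEsub z hzE).2 hy0b⟩
      have h := hPrec.2.2.2 A hA hnestAB hnestDA a haB m hmA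
      rw [hci, hcj]
      exact h
  exact hτ.2 Bh hBhτ Dh hDhτ
    ⟨hne, fun i hi j hj => by
        rw [hτmono Bh hBhτ i hi a haBh, hτmono Dh hDhτ j hj d0 hd0Dh]
        exact had0,
      hnestDB, hclause⟩

end Unique

section Base

variable {V : Type} {k : ℕ} {G : Bigraph V} {c : Fin k → V} {π τ : Set (Set (Fin k))}

lemma base_unique (hπ : MemP G c π)
    (hP0 : ∀ X ∈ π, ∀ Y ∈ π, ¬ PrecUn G c π X Y)
    (hτ : MemP0 G c τ) (hco : Coarser π τ)
    (hmm : ∀ C ∈ τ, ∃ i ∈ C, ∃ j ∈ C, (∀ x ∈ C, i ≤ x ∧ x ≤ j) ∧ SameBlock π i j) :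
    τ = π := by
  classical
  have hmono := hπ.2.1
  have hτp := hτ.1.1
  have hτmono := hτ.1.2.1
  have hsub : ∀ C ∈ τ, C ∈ π := by
    intro C hC
    obtain ⟨m, hmC, M, hMC, hbound, A, hA, hmA, hMA⟩ := hmm C hC
    have hAC : A ⊆ C := by
      obtain ⟨Z, hZτ, hAZ⟩ := hco A hA
      rwa [block_eq hτp hZτ hC (hAZ hmA) hmC] at hAZ
    have hCA : C ⊆ A := by
      intro z hzC
      by_contra hzA
      obtain ⟨Dz, ⟨hDzπ, hzDz⟩, _⟩ := hπ.1.2 z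
      have hDzC : Dz ⊆ C := by
        obtain ⟨Z, hZτ, hDZ⟩ := hco Dz hDzπ
        rwa [block_eq hτp hZτ hC (hDZ hzDz) hzC] at hDZ
      have hDzA : Dz ≠ A := fun h => hzA (h ▸ hzDz)
      have hms : ∀ d ∈ Dz, m < d ∧ d < M := by
        intro d hd
        have h1 : m ≤ d := (hbound d (hDzC hd)).1
        have h2 : d ≤ M := (hbound d (hDzC hd)).2
        constructor
        · exact lt_of_le_of_ne h1 (fun h => hDzA (block_eq hπ.1 hDzπ hA (h ▸ hd) hmA))
        · exact lt_of_le_of_ne h2 (fun h => hDzA (block_eq hπ.1 hDzπ hA (h ▸ hd) hMA))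
      have hnestDA : NestedIn Dz A := by
        refine nestedIn_mk ⟨z, hzDz⟩ ?_
          ⟨m, hmA, fun d hd => (hms d hd).1⟩ ⟨M, hMA, fun d hd => (hms d hd).2⟩
        intro x hx
        by_contra hcon
        push_neg at hcon
        obtain ⟨⟨d1, hd1, hd1x⟩, d2, hd2, hxd2⟩ := hcon
        have h1 : d1 < x := lt_of_le_of_ne hd1x
          (fun h => hDzA (block_eq hπ.1 hDzπ hA (h ▸ hd1) hx))
        have h2 : x < d2 := lt_of_le_of_ne hxd2
          (fun h => hDzA (block_eq hπ.1 hDzπ hA (by rw [h]; exact hd2) hx))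
        have hE := cross_E2 hπ hA hDzπ (Ne.symm hDzA) (hms d1 hd1).1 h1 h2 hmA hx hd1 hd2
        rw [hτmono C hC x (hAC hx) d1 (hDzC hd1)] at hE
        exact G.irrefl2 _ hE
      refine hP0 A hA Dz hDzπ ⟨Ne.symm hDzA, ?_, hnestDA, ?_⟩
      · intro i hi j hj
        exact hτmono C hC i (hAC hi) j (hDzC hj)
      · intro F hF hFA hDzF i hi j hj
        obtain ⟨Fh, hFhτ, hFsub⟩ := hco F hF
        by_cases hFC : Fh = C
        · exact Or.inr (hτmono C hC i (hAC hi) j (hFC ▸ hFsub hj))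
        · left
          obtain ⟨f1, hf1F, f2, hf2F, hf12, hgapF, hDzsub⟩ := hDzF
          obtain ⟨g1, hg1A, g2, hg2A, hg12, hgapA, hFsubA⟩ := hFA
          have hf2M : f2 < M := lt_of_lt_of_le (hFsubA f2 hf2F).2 (hbound g2 (hAC hg2A)).2
          have hE := cross_E2 hτ.1 hFhτ hC hFC (hDzsub z hzDz).1 (hDzsub z hzDz).2 hf2M
            (hFsub hf1F) (hFsub hf2F) hzC (hAC hMA)
          have hE' := G.symm2 _ _ hE
          rw [hτmono C hC z hzC i (hAC hi), hmono F hF f2 hf2F j hj] at hE'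
          exact hE'
    have : C = A := Set.Subset.antisymm hCA hAC
    exact this ▸ hA
  refine Set.Subset.antisymm hsub ?_
  intro A hA
  obtain ⟨C, hCτ, hAC⟩ := hco A hA
  obtain ⟨a0, ha0⟩ := block_nonempty hπ.1 hA
  have : A = C := block_eq hπ.1 hA (hsub C hCτ) ha0 (hAC ha0)
  exact this ▸ hCτ

end Base

section Assemble

variable {V : Type} {k : ℕ} {G : Bigraph V} {c : Fin k → V} {π : Set (Set (Fin k))}

lemma self_valid (hπ : MemP G c π) (hP0 : ∀ X ∈ π, ∀ Y ∈ π, ¬ PrecUn G c π X Y) :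
    MemP0 G c π ∧ Coarser π π ∧
      ∀ B ∈ π, ∃ i ∈ B, ∃ j ∈ B, (∀ x ∈ B, i ≤ x ∧ x ≤ j) ∧ SameBlock π i j := by
  refine ⟨⟨hπ, hP0⟩, fun A hA => ⟨A, hA, subset_rfl⟩, ?_⟩
  intro Bb hBb
  obtain ⟨i, hi, hmin⟩ := Set.exists_min_image Bb id (Set.toFinite Bb) (block_nonempty hπ.1 hBb)
  obtain ⟨j, hj, hmax⟩ := Set.exists_max_image Bb id (Set.toFinite Bb) (block_nonempty hπ.1 hBb)
  exact ⟨i, hi, j, hj, fun x hx => ⟨hmin x hx, hmax x hx⟩, ⟨Bb, hBb, hi, hj⟩⟩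

lemma main_induction : ∀ n : ℕ, ∀ π : Set (Set (Fin k)), π.ncard ≤ n → MemP G c π →
    ∃! σ : Set (Set (Fin k)), MemP0 G c σ ∧ Coarser π σ ∧
      ∀ B ∈ σ, ∃ i ∈ B, ∃ j ∈ B, (∀ x ∈ B, i ≤ x ∧ x ≤ j) ∧ SameBlock π i j := by
  intro n
  induction n with
  | zero =>
    intro π hle hπ
    have hemp : π = ∅ := (Set.ncard_eq_zero (Set.toFinite π)).mp (Nat.le_zero.mp hle)
    have hP0 : ∀ X ∈ π, ∀ Y ∈ π, ¬ PrecUn G c π X Y := by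
      intro X hX; rw [hemp] at hX; exact absurd hX (Set.notMem_empty X)
    exact ⟨π, self_valid hπ hP0,
      fun τ hτ => base_unique hπ hP0 hτ.1 hτ.2.1 hτ.2.2⟩
  | succ n ih =>
    intro π hle hπ
    by_cases hex : ∃ X ∈ π, ∃ Y ∈ π, PrecUn G c π X Y
    · obtain ⟨B, hB, D0, hD0, hPrec0⟩ := hex
      obtain ⟨D, hDπ, hBD, hcol, hnest, hE2clause⟩ := exists_tight hπ hB hD0 hPrec0
      obtain ⟨a, haB, b, hbB, hab, hgap, hDab⟩ := hnest
      have hPrec : PrecUn G c π B D :=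
        ⟨hBD, hcol, ⟨a, haB, b, hbB, hab, hgap, hDab⟩,
          fun F hF h1 h2 i hi j hj => Or.inl (hE2clause F hF h1 h2 i hi j hj)⟩
      set π' := mergeP π B D with hπ'def
      have hπ' : MemP G c π' :=
        memP_mergeP hπ hB hDπ haB hbB hab hgap hDab hcol hE2clause
      -- cardinality decreases
      have hDne : D ≠ B := Ne.symm hBD
      have hnotmem : B ∪ D ∉ π \ {B, D} := by
        rintro ⟨hmem, hne⟩
        have : B ∪ D = B := block_eq hπ.1 hmem hB (Or.inl haB) haB
        exact hne (Or.inl this)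
      have hsplit : π \ {B, D} = (π \ {B}) \ {D} := by
        ext X
        simp only [Set.mem_diff, Set.mem_insert_iff, Set.mem_singleton_iff, not_or]
        tauto
      have h1 : (π \ {B}).ncard + 1 = π.ncard :=
        Set.ncard_diff_singleton_add_one hB (Set.toFinite _)
      have h2 : ((π \ {B}) \ {D}).ncard + 1 = (π \ {B}).ncard :=
        Set.ncard_diff_singleton_add_one ⟨hDπ, hDne⟩ (Set.toFinite _)
      have h3 : π'.ncard = (π \ {B, D}).ncard + 1 :=
        Set.ncard_insert_of_notMem hnotmem (Set.toFinite _)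
      have hle' : π'.ncard ≤ n := by
        rw [h3, hsplit]
        omega
      obtain ⟨σ, ⟨hσ0, hσco, hσmm⟩, huniq⟩ := ih π' hle' hπ'
      have hBDmem : B ∪ D ∈ π' := mem_mergeP.mpr (Or.inl rfl)
      refine ⟨σ, ⟨hσ0, ?_, ?_⟩, ?_⟩
      · -- Coarser π σ
        intro A hA
        by_cases hAB : A = B
        · obtain ⟨C, hC, hsubC⟩ := hσco (B ∪ D) hBDmem
          exact ⟨C, hC, fun x hx => hsubC (Or.inl (hAB ▸ hx))⟩
        · by_cases hAD : A = D
          · obtain ⟨C, hC, hsubC⟩ := hσco (B ∪ D) hBDmem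
            exact ⟨C, hC, fun x hx => hsubC (Or.inr (hAD ▸ hx))⟩
          · exact hσco A (mem_mergeP.mpr (Or.inr ⟨hA, hAB, hAD⟩))
      · -- min/max condition w.r.t. π
        intro C hC
        obtain ⟨i, hiC, j, hjC, hbound, Z, hZ, hiZ, hjZ⟩ := hσmm C hC
        rcases mem_mergeP.mp hZ with hZB | ⟨hZπ, _, _⟩
        · -- Z = B ∪ D : the extremes lie in B
          subst hZB
          obtain ⟨C', hC', hsubC'⟩ := hσco (B ∪ D) hBDmem
          have hCC' : C' = C := block_eq hσ0.1.1 hC' hC (hsubC' hiZ) hiC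
          have hBsubC : B ⊆ C := fun x hx => hCC' ▸ hsubC' (Or.inl hx)
          have hiB : i ∈ B := by
            rcases hiZ with h | h
            · exact h
            · exact absurd (hbound a (hBsubC haB)).1 (not_le.2 (hDab i h).1)
          have hjB : j ∈ B := by
            rcases hjZ with h | h
            · exact h
            · exact absurd (hbound b (hBsubC hbB)).2 (not_le.2 (hDab j h).2)
          exact ⟨i, hiC, j, hjC, hbound, B, hB, hiB, hjB⟩
        · exact ⟨i, hiC, j, hjC, hbound, Z, hZπ, hiZ, hjZ⟩
      · -- uniqueness
        rintro τ ⟨hτ0, hτco, hτmm⟩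
        refine huniq τ ⟨hτ0, ?_, ?_⟩
        · -- Coarser π' τ
          intro X hX
          rcases mem_mergeP.mp hX with hXB | ⟨hXπ, _, _⟩
          · obtain ⟨C, hCτ, hBsub, hDsub⟩ := absorb hπ hB hDπ hPrec hτ0 hτco hτmm
            exact ⟨C, hCτ, by rw [hXB]; exact Set.union_subset hBsub hDsub⟩
          · exact hτco X hXπ
        · -- min/max condition w.r.t. π'
          intro C hC
          obtain ⟨i, hiC, j, hjC, hbound, A, hA, hiA, hjA⟩ := hτmm C hC
          by_cases hAB : A = B
          · exact ⟨i, hiC, j, hjC, hbound, B ∪ D, hBDmem, Or.inl (hAB ▸ hiA),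
              Or.inl (hAB ▸ hjA)⟩
          · by_cases hAD : A = D
            · exact ⟨i, hiC, j, hjC, hbound, B ∪ D, hBDmem, Or.inr (hAD ▸ hiA),
                Or.inr (hAD ▸ hjA)⟩
            · exact ⟨i, hiC, j, hjC, hbound, A, mem_mergeP.mpr (Or.inr ⟨hA, hAB, hAD⟩),
                hiA, hjA⟩
    · push_neg at hex
      exact ⟨π, self_valid hπ hex,
        fun τ hτ => base_unique hπ hex hτ.1 hτ.2.1 hτ.2.2⟩

end Assemble

/-- Lemma 2.22: every `π ∈ P(c,G)` has a unique `P(c,G)⁰`-envelope: a unique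
`σ ∈ P(c,G)⁰` with `σ ≥ π` such that the minimum and maximum of each block of `σ`
lie in the same block of `π`. -/
theorem exists_unique_P0_envelope {V : Type} {k : ℕ} (G : Bigraph V) (c : Fin k → V)
    (π : Set (Set (Fin k))) (hπ : MemP G c π) :
    ∃! σ : Set (Set (Fin k)), MemP0 G c σ ∧ Coarser π σ ∧
      ∀ B ∈ σ, ∃ i ∈ B, ∃ j ∈ B, (∀ x ∈ B, i ≤ x ∧ x ≤ j) ∧ SameBlock π i j := by
  exact main_induction π.ncard π le_rfl hπ
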